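/- arXiv:1709.10454 — 6 statements merged into one kernel-verified Lean document; each statement's English description precedes it below -/
import Mathlib

section
/- (Gronwall-type bound for the integral equation) Let v be holomorphic on the closed disk |z - z₀| ≤ R and satisfy v(z) = a + b(z-z₀) - (1/2)∫_{z₀}^{z} (z-ξ)p(ξ)v(ξ)dξ along radial segments, where p is holomorphic with |p| ≤ M on the disk. Then |v(z)| ≤ (|a| + |b|R)·exp((1/2)M R |z - z₀|) for |z - z₀| ≤ R. -/
/-!
Along the radius from `z₀` to `z`, the profile `f s = ‖v (z₀ + s (z - z₀))‖` satisfies, by the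
equation at `z₀ + s (z - z₀)` and the substitution `u = t s`, the integral inequality
`f s ≤ C + K ∫₀ˢ f` with `C = ‖a‖ + ‖b‖ R` and `K = M R ‖z - z₀‖ / 2`. Gronwall's lemma, applied
to the primitive `∫₀ˢ f` whose derivative is `f`, gives `f s ≤ C exp (K s)`; take `s = 1`.
-/

open Set Filter Topology Metric intervalIntegral

theorem le_mul_exp_of_le_add_mul_integral {f : ℝ → ℝ} {a b C K : ℝ}
    (hf : ContinuousOn f (Icc a b)) (hK : 0 ≤ K)
    (h : ∀ s ∈ Icc a b, f s ≤ C + K * ∫ u in a..s, f u) :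
    ∀ s ∈ Icc a b, f s ≤ C * Real.exp (K * (s - a)) := by
  set F : ℝ → ℝ := fun s => ∫ u in a..s, f u
  have hF_deriv : ∀ x ∈ Ico a b, HasDerivWithinAt F (f x) (Ici x) x := by
    intro x hx
    have hle : 𝓝[>] x ≤ 𝓝[Icc a b] x := nhdsWithin_le_of_mem <|
      mem_of_superset (Icc_mem_nhdsGT hx.2) (Icc_subset_Icc_left hx.1)
    exact integral_hasDerivWithinAt_right
      ((hf.mono (Icc_subset_Icc_right hx.2.le)).intervalIntegrable_of_Icc hx.1)
      ((hf.stronglyMeasurableAtFilter_nhdsWithin measurableSet_Icc x).filter_mono hle)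
      ((hf x (Ico_subset_Icc_self hx)).mono_left hle)
  have hF_cont : ContinuousOn F (Icc a b) := fun x hx => by
    have hab : a ≤ b := hx.1.trans hx.2
    refine (continuousOn_primitive_interval ?_).mono Icc_subset_uIcc x hx
    rw [uIcc_of_le hab]
    exact hf.integrableOn_Icc
  have hF_le : ∀ s ∈ Icc a b, F s ≤ gronwallBound 0 K C (s - a) :=
    le_gronwallBound_of_liminf_deriv_right_le hF_cont
      (fun x hx _ hr => (hF_deriv x hx).liminf_right_slope_le hr) (by simp [F])
      (fun x hx => by linarith [h x (Ico_subset_Icc_self hx)])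
  intro s hs
  calc f s ≤ C + K * gronwallBound 0 K C (s - a) := by
        grw [h s hs]
        gcongr
        exact hF_le s hs
    _ = C * Real.exp (K * (s - a)) := by
        rcases hK.eq_or_lt with rfl | hK
        · simp [gronwallBound_K0]
        · rw [gronwallBound_of_K_ne_0 hK.ne']
          field_simp
          ring

theorem add_ofReal_mul_sub_mem_closedBall {z₀ z : ℂ} {R t : ℝ} (hz : z ∈ closedBall z₀ R)
    (ht : t ∈ Icc (0 : ℝ) 1) : z₀ + t * (z - z₀) ∈ closedBall z₀ R := by
  have hz₀ : z₀ ∈ closedBall z₀ R := mem_closedBall_self (dist_nonneg.trans hz)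
  simpa [Complex.real_smul] using (convex_closedBall z₀ R).add_smul_sub_mem hz₀ hz ht

theorem continuousOn_radial {z₀ z : ℂ} {R : ℝ} {v : ℂ → ℂ}
    (hv : ContinuousOn v (closedBall z₀ R)) (hz : z ∈ closedBall z₀ R) :
    ContinuousOn (fun t : ℝ => v (z₀ + t * (z - z₀))) (Icc 0 1) :=
  hv.comp (by fun_prop) fun _ ht => add_ofReal_mul_sub_mem_closedBall hz ht

theorem norm_integral_volterra_le {z₀ w : ℂ} {R M : ℝ} {p v : ℂ → ℂ}
    (hM : ∀ ξ ∈ closedBall z₀ R, ‖p ξ‖ ≤ M) (hv : ContinuousOn v (closedBall z₀ R))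
    (hw : w ∈ closedBall z₀ R) :
    ‖∫ t in (0 : ℝ)..1, (1 - (t : ℂ)) * (w - z₀) * p (z₀ + t * (w - z₀)) * v (z₀ + t * (w - z₀))‖
      ≤ ‖w - z₀‖ * M * ∫ t in (0 : ℝ)..1, ‖v (z₀ + t * (w - z₀))‖ := by
  rw [← integral_const_mul]
  refine norm_integral_le_of_norm_le zero_le_one (.of_forall fun t ht => ?_) ?_
  · have ht : t ∈ Icc (0 : ℝ) 1 := Ioc_subset_Icc_self ht
    have h1t : ‖1 - (t : ℂ)‖ ≤ 1 := by
      rw [← Complex.ofReal_one, ← Complex.ofReal_sub, Complex.norm_of_nonneg (by linarith [ht.2])]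
      linarith [ht.1]
    have hp : ‖p (z₀ + t * (w - z₀))‖ ≤ M := hM _ (add_ofReal_mul_sub_mem_closedBall hw ht)
    simp only [norm_mul]
    calc _ ≤ 1 * ‖w - z₀‖ * M * ‖v (z₀ + t * (w - z₀))‖ := by gcongr
      _ = _ := by rw [one_mul]
  · exact (continuousOn_const.mul (continuousOn_radial hv hw).norm).intervalIntegrable_of_Icc
      zero_le_one

theorem norm_radial_le_add_mul_integral {z₀ z a b : ℂ} {R M s : ℝ} {p v : ℂ → ℂ}
    (hM : ∀ ξ ∈ closedBall z₀ R, ‖p ξ‖ ≤ M) (hv : ContinuousOn v (closedBall z₀ R))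
    (heq : ∀ w ∈ closedBall z₀ R,
      v w = a + b * (w - z₀) - (1 / 2) * ((w - z₀) *
        ∫ t in (0 : ℝ)..1, (1 - (t : ℂ)) * (w - z₀) *
          p (z₀ + (t : ℂ) * (w - z₀)) * v (z₀ + (t : ℂ) * (w - z₀))))
    (hz : z ∈ closedBall z₀ R) (hs : s ∈ Icc (0 : ℝ) 1) :
    ‖v (z₀ + s * (z - z₀))‖ ≤ ‖a‖ + ‖b‖ * R +
      1 / 2 * M * R * ‖z - z₀‖ * ∫ u in (0 : ℝ)..s, ‖v (z₀ + u * (z - z₀))‖ := by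
  set w := z₀ + s * (z - z₀)
  have hw : w ∈ closedBall z₀ R := add_ofReal_mul_sub_mem_closedBall hz hs
  have hwR : ‖w - z₀‖ ≤ R := mem_closedBall_iff_norm.1 hw
  have hM0 : 0 ≤ M := (norm_nonneg _).trans (hM z₀ (mem_closedBall_self (dist_nonneg.trans hz)))
  have hI0 : 0 ≤ ∫ u in (0 : ℝ)..s, ‖v (z₀ + u * (z - z₀))‖ :=
    integral_nonneg hs.1 fun _ _ => norm_nonneg _
  -- substituting `u = t * s` turns the integral over the segment `[z₀, w]` into one over `[0, s]`
  have hsubst : ‖w - z₀‖ * ∫ t in (0 : ℝ)..1, ‖v (z₀ + t * (w - z₀))‖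
      = ‖z - z₀‖ * ∫ u in (0 : ℝ)..s, ‖v (z₀ + u * (z - z₀))‖ := by
    have := smul_integral_comp_mul_right (fun u : ℝ => ‖v (z₀ + u * (z - z₀))‖) s (a := 0) (b := 1)
    simp only [smul_eq_mul, zero_mul, one_mul, Complex.ofReal_mul, mul_assoc] at this
    simp only [w, add_sub_cancel_left, norm_mul, Complex.norm_of_nonneg hs.1, ← this]
    ring
  rw [heq w hw]
  calc _ ≤ ‖a‖ + ‖b‖ * ‖w - z₀‖ + 1 / 2 * (‖w - z₀‖ *
          ‖∫ t in (0 : ℝ)..1, (1 - (t : ℂ)) * (w - z₀) *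
            p (z₀ + (t : ℂ) * (w - z₀)) * v (z₀ + (t : ℂ) * (w - z₀))‖) := by
        refine (norm_sub_le _ _).trans (add_le_add ((norm_add_le _ _).trans ?_) ?_) <;>
          simp
    _ ≤ ‖a‖ + ‖b‖ * R + 1 / 2 * (R * (‖w - z₀‖ * M *
          ∫ t in (0 : ℝ)..1, ‖v (z₀ + t * (w - z₀))‖)) := by
        have hR : 0 ≤ R := (norm_nonneg _).trans hwR
        gcongr
        exact norm_integral_volterra_le hM hv hw
    _ = _ := by
        rw [mul_right_comm _ M, hsubst]
        ring

theorem gronwall_volterra_general (z₀ : ℂ) (R : ℝ) (a b : ℂ) (M : ℝ)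
    (p v : ℂ → ℂ)
    (hM : ∀ ξ ∈ Metric.closedBall z₀ R, ‖p ξ‖ ≤ M)
    (hv : DifferentiableOn ℂ v (Metric.closedBall z₀ R))
    (heq : ∀ z ∈ Metric.closedBall z₀ R,
      v z = a + b * (z - z₀) - (1 / 2) * ((z - z₀) *
        ∫ t in (0:ℝ)..1, (1 - (t : ℂ)) * (z - z₀) *
          p (z₀ + (t : ℂ) * (z - z₀)) * v (z₀ + (t : ℂ) * (z - z₀)))) :
    ∀ z ∈ Metric.closedBall z₀ R,
      ‖v z‖ ≤ (‖a‖ + ‖b‖ * R) *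
        Real.exp ((1 / 2) * M * R * ‖z - z₀‖) := by
  intro z hz
  have hR : 0 ≤ R := dist_nonneg.trans hz
  have hM0 : 0 ≤ M := (norm_nonneg _).trans (hM z₀ (mem_closedBall_self hR))
  have h := le_mul_exp_of_le_add_mul_integral (continuousOn_radial hv.continuousOn hz).norm
    (by positivity) (fun s hs => norm_radial_le_add_mul_integral hM hv.continuousOn heq hz hs)
    1 (right_mem_Icc.2 zero_le_one)
  simpa using h

/-- Gronwall-type bound for the Volterra integral equation
v(z) = a + b(z-z₀) - (1/2)∫_{z₀}^z (z-ξ)p(ξ)v(ξ)dξ (integral along the radial segment):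
if |p| ≤ M on the closed disk of radius R, then
|v(z)| ≤ (|a| + |b|R)·exp((1/2)MR|z-z₀|). -/
theorem gronwall_volterra (z₀ : ℂ) (R : ℝ) (hR : 0 < R) (a b : ℂ) (M : ℝ)
    (p v : ℂ → ℂ)
    (hp : DifferentiableOn ℂ p (Metric.closedBall z₀ R))
    (hM : ∀ ξ ∈ Metric.closedBall z₀ R, ‖p ξ‖ ≤ M)
    (hv : DifferentiableOn ℂ v (Metric.closedBall z₀ R))
    (heq : ∀ z ∈ Metric.closedBall z₀ R,
      v z = a + b * (z - z₀) - (1 / 2) * ((z - z₀) *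
        ∫ t in (0:ℝ)..1, (1 - (t : ℂ)) * (z - z₀) *
          p (z₀ + (t : ℂ) * (z - z₀)) * v (z₀ + (t : ℂ) * (z - z₀)))) :
    ∀ z ∈ Metric.closedBall z₀ R,
      ‖v z‖ ≤ (‖a‖ + ‖b‖ * R) *
        Real.exp ((1 / 2) * M * R * ‖z - z₀‖) :=
  gronwall_volterra_general z₀ R a b M p v hM hv heq
end

section
/- (Birkhoff transitivity criterion) Let X be a second countable Baire topological space and 𝒯 a family of continuous self-maps of X that acts transitively, i.e., for every pair of nonempty open sets U, V ⊆ X there exists τ ∈ 𝒯 with τ(U) ∩ V ≠ ∅. Then the set of universal elements {u ∈ X : {τ(u) : τ ∈ 𝒯} is dense in X} is a dense G_δ subset of X; in particular it is nonempty. -/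
/-- Birkhoff transitivity criterion: if a family of continuous self-maps of a second
countable Baire space acts transitively, then the universal elements form a dense Gδ set;
in particular there exists a universal element. -/
theorem birkhoff_transitivity {X : Type*} [TopologicalSpace X] [SecondCountableTopology X]
    [BaireSpace X] [Nonempty X]
    (T : Set (X → X)) (hcont : ∀ τ ∈ T, Continuous τ)
    (htrans : ∀ U V : Set X, IsOpen U → IsOpen V → U.Nonempty → V.Nonempty →
      ∃ τ ∈ T, (τ '' U ∩ V).Nonempty) :
    IsGδ {u : X | Dense {y : X | ∃ τ ∈ T, τ u = y}} ∧
      Dense {u : X | Dense {y : X | ∃ τ ∈ T, τ u = y}} ∧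
      {u : X | Dense {y : X | ∃ τ ∈ T, τ u = y}}.Nonempty := by
  obtain ⟨b, hbc, -, hb⟩ := TopologicalSpace.exists_countable_basis X
  have key : {u : X | Dense {y : X | ∃ τ ∈ T, τ u = y}} =
      ⋂ U ∈ {U ∈ b | U.Nonempty}, ⋃ τ ∈ T, τ ⁻¹' U := by
    ext u
    simp only [Set.mem_setOf_eq, Set.mem_iInter, Set.mem_iUnion, Set.mem_preimage,
      Set.mem_sep_iff]
    constructor
    · rintro hd U ⟨hUb, hUne⟩
      obtain ⟨y, ⟨τ, hτ, rfl⟩, hyU⟩ := hd.exists_mem_open (hb.isOpen hUb) hUne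
      exact ⟨τ, hτ, hyU⟩
    · intro h
      rw [hb.dense_iff]
      intro U hUb hUne
      obtain ⟨τ, hτT, hτu⟩ := h U ⟨hUb, hUne⟩
      exact ⟨τ u, hτu, τ, hτT, rfl⟩
  have hopen : ∀ U ∈ {U ∈ b | U.Nonempty}, IsOpen (⋃ τ ∈ T, τ ⁻¹' U) := by
    rintro U ⟨hUb, -⟩
    exact isOpen_biUnion fun τ hτ => (hb.isOpen hUb).preimage (hcont τ hτ)
  have hdense : ∀ U ∈ {U ∈ b | U.Nonempty}, Dense (⋃ τ ∈ T, τ ⁻¹' U) := by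
    rintro U ⟨hUb, hUne⟩
    rw [dense_iff_inter_open]
    intro V hV hVne
    obtain ⟨τ, hτT, y, ⟨x, hxV, rfl⟩, hyU⟩ := htrans V U hV (hb.isOpen hUb) hVne hUne
    exact ⟨x, hxV, Set.mem_biUnion hτT hyU⟩
  have hc : {U ∈ b | U.Nonempty}.Countable := hbc.mono (Set.sep_subset _ _)
  have hd : Dense (⋂ U ∈ {U ∈ b | U.Nonempty}, ⋃ τ ∈ T, τ ⁻¹' U) :=
    dense_biInter_of_isOpen hopen hc hdense
  rw [key]
  exact ⟨IsGδ.biInter hc fun U hU => (hopen U hU).isGδ, hd, hd.nonempty⟩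
end

section
/- There is no holomorphic function f on ℂ∖{0} that is universal under conformal automorphisms: for every f ∈ 𝓗(ℂ∖{0}), the set {f ∘ φ : φ ∈ Aut(ℂ∖{0})} is not dense in 𝓗(ℂ∖{0}) with the compact-open topology. -/
/-!
Approximate the functions `exp (N (z + 1/z))` for `N = 1` and `N = 8` on the circles of radii
`1/2, 1, 2`. As these functions are invariant under `z ↦ 1/z`, both automorphisms may be taken
to be dilations `z ↦ a z` and `z ↦ b z`. The approximations pin down the size of `f` on the circles
of radii `|a|/2, |a|, 2|a|` and `|b|/2, |b|, 2|b|`: at most about `e^{N(r + 1/r)}` on them, and at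
least that much at the points `ra` and `rb`. Comparing `|a|` with `|b|`, one of the points
`b/2, b, 2b` lies in an annulus on whose boundary circles `f` is much smaller than at that point,
contradicting the maximum principle.
-/

/-- The conformal automorphisms of ℂ∖{0}: z ↦ az and z ↦ a/z for a ≠ 0. -/
def IsAutCStar (φ : ℂ → ℂ) : Prop :=
  ∃ a : ℂ, a ≠ 0 ∧ ((∀ z : ℂ, z ≠ 0 → φ z = a * z) ∨ (∀ z : ℂ, z ≠ 0 → φ z = a / z))

open Complex Metric Set

noncomputable def expJoukowski (N : ℝ) (z : ℂ) : ℂ := exp (N * (z + z⁻¹))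

lemma differentiableOn_expJoukowski (N : ℝ) :
    DifferentiableOn ℂ (expJoukowski N) {z | z ≠ 0} := fun _ hz =>
  ((differentiableAt_id.add (differentiableAt_inv hz)).const_mul _).cexp.differentiableWithinAt

lemma expJoukowski_inv (N : ℝ) (z : ℂ) : expJoukowski N z⁻¹ = expJoukowski N z := by
  rw [expJoukowski, expJoukowski, inv_inv, add_comm]

lemma norm_expJoukowski_le {N : ℝ} (hN : 0 ≤ N) (z : ℂ) :
    ‖expJoukowski N z‖ ≤ Real.exp (N * (‖z‖ + ‖z‖⁻¹)) := by
  rw [expJoukowski, norm_exp, Real.exp_le_exp, re_ofReal_mul, add_re, ← norm_inv]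
  exact mul_le_mul_of_nonneg_left (add_le_add (re_le_norm z) (re_le_norm z⁻¹)) hN

lemma norm_expJoukowski_ofReal (N r : ℝ) :
    ‖expJoukowski N r‖ = Real.exp (N * (r + r⁻¹)) := by
  rw [expJoukowski, ← ofReal_inv, ← ofReal_add, ← ofReal_mul, norm_exp_ofReal]

theorem norm_le_of_forall_sphere_norm_le {f : ℂ → ℂ} (hf : DifferentiableOn ℂ f {z | z ≠ 0})
    {r R C : ℝ} (hr : 0 < r) (hfr : ∀ w ∈ sphere (0 : ℂ) r, ‖f w‖ ≤ C)
    (hfR : ∀ w ∈ sphere (0 : ℂ) R, ‖f w‖ ≤ C) {z : ℂ} (hz : ‖z‖ ∈ Icc r R) : ‖f z‖ ≤ C := by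
  have hboundary : ∀ w : ℂ, ‖w‖ ∈ Icc r R → ‖w‖ ∉ Ioo r R → ‖f w‖ ≤ C := by
    rintro w ⟨hrw, hwR⟩ hw
    rcases hrw.eq_or_lt with hrw | hrw
    · exact hfr w (mem_sphere_zero_iff_norm.2 hrw.symm)
    rcases hwR.eq_or_lt with hwR | hwR
    · exact hfR w (mem_sphere_zero_iff_norm.2 hwR)
    exact absurd ⟨hrw, hwR⟩ hw
  by_cases hzU : ‖z‖ ∈ Ioo r R
  swap
  · exact hboundary z hz hzU
  set U : Set ℂ := norm ⁻¹' Ioo r R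
  have hclosure : closure U ⊆ norm ⁻¹' Icc r R :=
    closure_minimal (preimage_mono Ioo_subset_Icc_self) (isClosed_Icc.preimage continuous_norm)
  have hne : norm ⁻¹' Icc r R ⊆ {w : ℂ | w ≠ 0} := fun w hw => norm_pos_iff.1 (hr.trans_le hw.1)
  refine Complex.norm_le_of_forall_mem_frontier_norm_le
    ((isBounded_closedBall (x := 0) (r := R)).subset fun w hw => mem_closedBall_zero_iff.2 hw.2.le)
    ⟨hf.mono (subset_closure.trans (hclosure.trans hne)), hf.continuousOn.mono (hclosure.trans hne)⟩
    (fun w hw => ?_) (subset_closure hzU)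
  rw [(isOpen_Ioo.preimage continuous_norm).frontier_eq] at hw
  exact hboundary w (hclosure hw.1) hw.2

lemma IsAutCStar.exists_mul_approx {f g φ : ℂ → ℂ} (hφ : IsAutCStar φ) {K : Set ℂ}
    (hK : K ⊆ {z | z ≠ 0}) (hK_inv : ∀ z ∈ K, z⁻¹ ∈ K) (hg : ∀ z, g z⁻¹ = g z) {ε : ℝ}
    (h : ∀ z ∈ K, ‖f (φ z) - g z‖ < ε) : ∃ a ≠ 0, ∀ z ∈ K, ‖f (a * z) - g z‖ < ε := by
  obtain ⟨a, ha, hmul | hdiv⟩ := hφ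
  · exact ⟨a, ha, fun z hz => hmul z (hK hz) ▸ h z hz⟩
  · refine ⟨a, ha, fun z hz => ?_⟩
    simpa only [hdiv _ (inv_ne_zero (hK hz)), div_inv_eq_mul, hg] using h z⁻¹ (hK_inv z hz)

section Approximation

variable {f : ℂ → ℂ} {N : ℝ} {a : ℂ} {K : Set ℂ}

lemma norm_le_of_approx_expJoukowski (hN : 0 ≤ N) (ha : a ≠ 0)
    (h : ∀ z ∈ K, ‖f (a * z) - expJoukowski N z‖ < 1) {r : ℝ} (hK : sphere 0 r ⊆ K) :
    ∀ w ∈ sphere (0 : ℂ) (r * ‖a‖), ‖f w‖ ≤ Real.exp (N * (r + r⁻¹)) + 1 := by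
  intro w hw
  have hz : a⁻¹ * w ∈ sphere 0 r := by
    rw [mem_sphere_zero_iff_norm, norm_mul, norm_inv, mem_sphere_zero_iff_norm.1 hw,
      mul_comm, mul_assoc, mul_inv_cancel₀ (norm_ne_zero_iff.2 ha), mul_one]
  have happrox := h _ (hK hz)
  rw [mul_inv_cancel_left₀ ha] at happrox
  have hg := norm_expJoukowski_le hN (a⁻¹ * w)
  rw [mem_sphere_zero_iff_norm.1 hz] at hg
  linarith [norm_le_insert' (f w) (expJoukowski N (a⁻¹ * w))]

lemma lt_norm_of_approx_expJoukowski (h : ∀ z ∈ K, ‖f (a * z) - expJoukowski N z‖ < 1)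
    {r : ℝ} (hr : 0 < r) (hK : sphere 0 r ⊆ K) :
    Real.exp (N * (r + r⁻¹)) - 1 < ‖f (a * r)‖ := by
  have happrox := h r (hK (by simp [abs_of_pos hr]))
  rw [norm_sub_rev] at happrox
  linarith [norm_sub_norm_le (expJoukowski N r) (f (a * r)), norm_expJoukowski_ofReal N r]

end Approximation

def threeCircles : Set ℂ := norm ⁻¹' {2⁻¹, 1, 2}

lemma threeCircles_subset_ne_zero : threeCircles ⊆ {z | z ≠ 0} := by
  intro z hz
  rw [mem_ofPred_eq, ← norm_ne_zero_iff]
  rcases hz with hz | hz | hz <;> rw [hz] <;> norm_num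

lemma inv_mem_threeCircles {z : ℂ} (hz : z ∈ threeCircles) : z⁻¹ ∈ threeCircles := by
  simp only [threeCircles, mem_preimage, norm_inv] at hz ⊢
  rcases hz with hz | hz | hz <;> rw [hz] <;> norm_num

lemma isCompact_threeCircles : IsCompact threeCircles :=
  isCompact_of_isClosed_isBounded ((toFinite _).isClosed.preimage continuous_norm)
    ((isBounded_closedBall (x := 0) (r := 2)).subset fun z hz => by
      rw [mem_closedBall_zero_iff]
      rcases hz with hz | hz | hz <;> rw [hz] <;> norm_num)

lemma sphere_subset_threeCircles {r : ℝ} (hr : r ∈ ({2⁻¹, 1, 2} : Set ℝ)) :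
    sphere (0 : ℂ) r ⊆ threeCircles := fun z hz => by
  rwa [threeCircles, mem_preimage, mem_sphere_zero_iff_norm.1 hz]

lemma exp_add_one_lt_exp_sub_one {x y : ℝ} (hx : 0 ≤ x) (hxy : x + 2 ≤ y) :
    Real.exp x + 1 < Real.exp y - 1 := by
  have h2 : 3 < Real.exp 2 := by linarith [Real.add_one_lt_exp (two_ne_zero (α := ℝ))]
  have hy : Real.exp x * Real.exp 2 ≤ Real.exp y := by
    rw [← Real.exp_add]; exact Real.exp_le_exp.2 (by linarith)
  nlinarith [Real.one_le_exp hx]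

section OneAndEight

variable {f : ℂ → ℂ} {a b : ℂ}

lemma norm_lt_two_mul_norm_of_approx_expJoukowski (hf : DifferentiableOn ℂ f {z | z ≠ 0})
    (ha : a ≠ 0) (hb : b ≠ 0) (h₁ : ∀ z ∈ threeCircles, ‖f (a * z) - expJoukowski 1 z‖ < 1)
    (h₈ : ∀ z ∈ threeCircles, ‖f (b * z) - expJoukowski 8 z‖ < 1) :
    ‖a‖ < 2 * ‖b‖ ∧ ‖b‖ < 2 * ‖a‖ := by
  have lower₈ := fun r (hr₀ : 0 < r) hr => lt_norm_of_approx_expJoukowski h₈ hr₀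
    (sphere_subset_threeCircles (r := r) hr)
  have gap := exp_add_one_lt_exp_sub_one (x := 16) (y := 20) (by norm_num) (by norm_num)
  -- On and between the circles `|w| = |a|`, `|w| = |b|` this bound holds, while
  -- `|f (2b)|` and `|f (b/2)|` exceed `e^20 - 1`.
  have bound : ∀ w ∈ sphere (0 : ℂ) ‖a‖ ∪ sphere 0 ‖b‖, ‖f w‖ ≤ Real.exp 16 + 1 := by
    rintro w (hw | hw)
    · have := norm_le_of_approx_expJoukowski zero_le_one ha h₁ (sphere_subset_threeCircles
        (r := 1) (by simp)) w (by simpa using hw)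
      norm_num at this
      linarith [Real.exp_le_exp.2 (by norm_num : (2 : ℝ) ≤ 16)]
    · have := norm_le_of_approx_expJoukowski (by norm_num) hb h₈ (sphere_subset_threeCircles
        (r := 1) (by simp)) w (by simpa using hw)
      norm_num at this
      exact this
  constructor
  · by_contra! hsmall
    have hz : ‖b * (2 : ℝ)‖ ∈ Icc ‖b‖ ‖a‖ := by
      simp only [ofReal_ofNat, Complex.norm_mul, norm_ofNat, mem_Icc]
      constructor <;> linarith [norm_nonneg b]
    have hub := norm_le_of_forall_sphere_norm_le hf (norm_pos_iff.2 hb)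
      (fun w hw => bound w (.inr hw)) (fun w hw => bound w (.inl hw)) hz
    have hlb := lower₈ 2 two_pos (by simp)
    norm_num at hlb hub
    linarith
  · by_contra! hlarge
    have hz : ‖b * (2⁻¹ : ℝ)‖ ∈ Icc ‖a‖ ‖b‖ := by
      simp only [ofReal_inv, ofReal_ofNat, Complex.norm_mul, norm_inv, norm_ofNat, mem_Icc]
      constructor <;> linarith [norm_nonneg b]
    have hub := norm_le_of_forall_sphere_norm_le hf (norm_pos_iff.2 ha)
      (fun w hw => bound w (.inl hw)) (fun w hw => bound w (.inr hw)) hz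
    have hlb := lower₈ 2⁻¹ (by norm_num) (by simp)
    norm_num at hlb hub
    linarith

theorem false_of_approx_expJoukowski_one_eight (hf : DifferentiableOn ℂ f {z | z ≠ 0})
    (ha : a ≠ 0) (hb : b ≠ 0) (h₁ : ∀ z ∈ threeCircles, ‖f (a * z) - expJoukowski 1 z‖ < 1)
    (h₈ : ∀ z ∈ threeCircles, ‖f (b * z) - expJoukowski 8 z‖ < 1) : False := by
  obtain ⟨hab, hba⟩ := norm_lt_two_mul_norm_of_approx_expJoukowski hf ha hb h₁ h₈
  have upper (r : ℝ) (hr : r ∈ ({2⁻¹, 1, 2} : Set ℝ)) :=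
    norm_le_of_approx_expJoukowski zero_le_one ha h₁ (sphere_subset_threeCircles hr)
  have hub := norm_le_of_forall_sphere_norm_le hf (r := 2⁻¹ * ‖a‖) (R := 2 * ‖a‖)
    (C := Real.exp (5 / 2) + 1) (by positivity)
    (fun w hw => by convert upper 2⁻¹ (by simp) w hw using 3; norm_num)
    (fun w hw => by convert upper 2 (by simp) w hw using 3; norm_num)
    (z := b) ⟨by linarith, by linarith⟩
  have hlb := lt_norm_of_approx_expJoukowski h₈ one_pos (sphere_subset_threeCircles (by simp))
  norm_num at hlb
  linarith [exp_add_one_lt_exp_sub_one (x := 5 / 2) (y := 16) (by norm_num) (by norm_num)]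

end OneAndEight

/-- There is no universal holomorphic function on ℂ∖{0}: for every holomorphic f on ℂ∖{0},
the set {f ∘ φ : φ ∈ Aut(ℂ∖{0})} is not dense in 𝓗(ℂ∖{0}) for the compact-open topology. -/
theorem no_universal_on_punctured_plane (f : ℂ → ℂ)
    (hf : DifferentiableOn ℂ f {z : ℂ | z ≠ 0}) :
    ¬ (∀ g : ℂ → ℂ, DifferentiableOn ℂ g {z : ℂ | z ≠ 0} →
        ∀ K : Set ℂ, K ⊆ {z : ℂ | z ≠ 0} → IsCompact K → ∀ ε > (0:ℝ),
          ∃ φ : ℂ → ℂ, IsAutCStar φ ∧ ∀ z ∈ K, ‖f (φ z) - g z‖ < ε) := by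
  intro H
  have approx (N : ℝ) : ∃ a ≠ 0, ∀ z ∈ threeCircles, ‖f (a * z) - expJoukowski N z‖ < 1 := by
    obtain ⟨φ, hφ, h⟩ := H (expJoukowski N) (differentiableOn_expJoukowski N) threeCircles
      threeCircles_subset_ne_zero isCompact_threeCircles 1 one_pos
    exact hφ.exists_mul_approx threeCircles_subset_ne_zero (fun _ => inv_mem_threeCircles)
      (expJoukowski_inv N) h
  obtain ⟨a, ha, h₁⟩ := approx 1
  obtain ⟨b, hb, h₈⟩ := approx 8
  exact false_of_approx_expJoukowski_one_eight hf ha hb h₁ h₈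
end

section
/- Let K = {z ∈ ℂ : 1/2 ≤ |z| ≤ 2} and f(z) = -1/z². There is no sequence (g_n) of meromorphic, locally univalent functions on all of ℂ converging to f uniformly on K with respect to the chordal metric. -/
/-- The chordal metric on the Riemann sphere (restricted to finite points). -/
noncomputable def chordal (z w : ℂ) : ℝ :=
  ‖z - w‖ /
    (Real.sqrt (1 + ‖z‖ ^ 2) * Real.sqrt (1 + ‖w‖ ^ 2))

/-- g has a simple pole at z. -/
def SimplePoleAt (g : ℂ → ℂ) (z : ℂ) : Prop :=
  ∃ c : ℂ, c ≠ 0 ∧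
    Filter.Tendsto (fun w => (w - z) * g w) (nhdsWithin z {z}ᶜ) (nhds c)

/-- g is meromorphic and locally univalent on ℂ: only simple poles, and g' ≠ 0 wherever
g is finite. -/
def LocUnivMeroOn (g : ℂ → ℂ) : Prop :=
  MeromorphicOn g Set.univ ∧
    ∀ z : ℂ, (AnalyticAt ℂ g z ∧ deriv g z ≠ 0) ∨ SimplePoleAt g z

/-!
If `g` is chordally within `1/1000` of `f(z) = -1/z²` on the annulus, then `g` has no poles
there and, by Cauchy's estimate, `g' ≈ f' = 2/z³` on the unit circle. Since `g` is locally
univalent, `1/g'` is continuous on `ℂ` and vanishes exactly at the poles of `g`, each time to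
order two. Dividing out these double zeros in the disc `|z| < 5/4` leaves a nonvanishing function,
so `1/g'` has a continuous square root `r` on that disc. But `r(z)² ≈ z³/2` is impossible on the
unit circle: `q(z) = 2 r(z) r(-z) / (i z³)` satisfies `q² ≈ 1`, so `Re q` never vanishes there,
while `q(-1) = -q(1)`.
-/

open Complex Filter Metric Set Topology

section SimplePole

variable {g : ℂ → ℂ} {p : ℂ}

theorem SimplePoleAt.not_isBoundedUnder (h : SimplePoleAt g p) :
    ¬ IsBoundedUnder (· ≤ ·) (𝓝[≠] p) (fun w => ‖g w‖) := by
  obtain ⟨c, hc, hlim⟩ := h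
  intro hb
  have hsub : Tendsto (fun w => w - p) (𝓝[≠] p) (𝓝 0) :=
    tendsto_sub_nhds_zero_iff.mpr nhdsWithin_le_nhds
  exact hc (tendsto_nhds_unique hlim (hsub.zero_mul_isBoundedUnder_le hb))

theorem SimplePoleAt.not_continuousAt (h : SimplePoleAt g p) : ¬ ContinuousAt g p := fun hc =>
  h.not_isBoundedUnder (hc.norm.isBoundedUnder_le.mono nhdsWithin_le_nhds)

theorem SimplePoleAt.deriv_eq_zero (h : SimplePoleAt g p) : deriv g p = 0 :=
  deriv_zero_of_not_differentiableAt fun hd => h.not_continuousAt hd.continuousAt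

theorem SimplePoleAt.meromorphicOrderAt_eq_neg_one (h : SimplePoleAt g p)
    (hg : MeromorphicAt g p) : meromorphicOrderAt g p = -1 := by
  obtain ⟨c, hc, hlim⟩ := h
  have hsub : MeromorphicAt (· - p) p := (analyticAt_id.sub analyticAt_const).meromorphicAt
  have h0 : meromorphicOrderAt ((· - p) * g) p = 0 :=
    (tendsto_ne_zero_iff_meromorphicOrderAt_eq_zero (hsub.mul hg)).mp ⟨c, hc, hlim⟩
  rw [meromorphicOrderAt_mul hsub hg, meromorphicOrderAt_id_sub_const] at h0
  generalize meromorphicOrderAt g p = o at h0 ⊢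
  induction o using WithTop.recTopCoe with
  | top => simp at h0
  | coe n =>
    have : 1 + n = 0 := by exact_mod_cast h0
    rw [show n = -1 by omega]; rfl

theorem SimplePoleAt.exists_inv_deriv_eq (h : SimplePoleAt g p) (hg : MeromorphicAt g p) :
    ∃ ψ : ℂ → ℂ, AnalyticAt ℂ ψ p ∧ ψ p ≠ 0 ∧
      (deriv g)⁻¹ =ᶠ[𝓝 p] fun w => (w - p) ^ 2 * ψ w := by
  have hderiv : meromorphicOrderAt (deriv g) p = ((-1 - 1 : ℤ) : WithTop ℤ) :=
    meromorphicOrderAt_deriv_eq_sub_one (by norm_num) (h.meromorphicOrderAt_eq_neg_one hg)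
  have hinv : meromorphicOrderAt (deriv g)⁻¹ p = ((2 : ℤ) : WithTop ℤ) := by
    rw [meromorphicOrderAt_inv, hderiv]; rfl
  obtain ⟨ψ, hψ, hψp, heq⟩ := (meromorphicOrderAt_eq_int_iff hg.deriv.inv).mp hinv
  refine ⟨ψ, hψ, hψp, ?_⟩
  rw [eventually_nhdsWithin_iff] at heq
  filter_upwards [heq] with w hw
  rcases eq_or_ne w p with rfl | hwp
  -- at the pole both sides vanish, the left one through the junk value `deriv g p = 0`
  · simp [h.deriv_eq_zero]
  · simpa using hw hwp

end SimplePole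

theorem Convex.isSimplyConnected {E : Type*} [NormedAddCommGroup E] [NormedSpace ℝ E]
    {s : Set E} (hs : Convex ℝ s) (hne : s.Nonempty) : IsSimplyConnected s :=
  haveI := hs.contractibleSpace hne
  SimplyConnectedSpace.ofContractible s

section SquareRoot

variable {F : ℂ → ℂ}

theorem tendsto_div_sq_prod_sub_of_eventuallyEq {Z : Finset ℂ} {q : ℂ} (hq : q ∈ Z)
    {ψ : ℂ → ℂ} (hψ : ContinuousAt ψ q) (hψq : ψ q ≠ 0)
    (hF : F =ᶠ[𝓝 q] fun w => (w - q) ^ 2 * ψ w) :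
    ∃ y ≠ 0, Tendsto (fun w => F w / (∏ a ∈ Z, (w - a)) ^ 2) (𝓝[≠] q) (𝓝 y) := by
  set C : ℂ → ℂ := fun w => ∏ a ∈ Z.erase q, (w - a)
  have hCq : C q ≠ 0 := Finset.prod_ne_zero_iff.mpr fun a ha =>
    sub_ne_zero.mpr (Finset.ne_of_mem_erase ha).symm
  have hC : Continuous C := continuous_finsetProd _ fun a _ => continuous_id.sub continuous_const
  refine ⟨ψ q / C q ^ 2, div_ne_zero hψq (pow_ne_zero 2 hCq), ?_⟩
  have hlim : Tendsto (fun w => ψ w / C w ^ 2) (𝓝[≠] q) (𝓝 (ψ q / C q ^ 2)) :=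
    (hψ.div (hC.continuousAt.pow 2) (pow_ne_zero 2 hCq)).tendsto.mono_left nhdsWithin_le_nhds
  refine hlim.congr' ?_
  filter_upwards [hF.filter_mono nhdsWithin_le_nhds, self_mem_nhdsWithin] with w hw hwq
  have hwq' : w - q ≠ 0 := sub_ne_zero.mpr hwq
  rw [hw, ← Finset.mul_prod_erase Z (fun a => w - a) hq, mul_pow,
    mul_div_mul_left _ _ (pow_ne_zero 2 hwq')]

theorem exists_continuousOn_sq_eq {U : Set ℂ} (hUo : IsOpen U) (hUs : IsSimplyConnected U)
    (hF : ContinuousOn F U) (hfin : {z ∈ U | F z = 0}.Finite)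
    (hdouble : ∀ q ∈ U, F q = 0 → ∃ ψ : ℂ → ℂ, ContinuousAt ψ q ∧ ψ q ≠ 0 ∧
      F =ᶠ[𝓝 q] fun w => (w - q) ^ 2 * ψ w) :
    ∃ s : ℂ → ℂ, ContinuousOn s U ∧ ∀ z ∈ U, s z ^ 2 = F z := by
  set Z := hfin.toFinset
  have hZ : ∀ z, z ∈ Z ↔ z ∈ U ∧ F z = 0 := fun z => hfin.mem_toFinset
  set B : ℂ → ℂ := fun w => ∏ a ∈ Z, (w - a)
  have hBc : Continuous B := continuous_finsetProd _ fun a _ => continuous_id.sub continuous_const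
  have hB : ∀ w, B w = 0 ↔ w ∈ Z := by simp [B, Finset.prod_eq_zero_iff, sub_eq_zero]
  set φ : ℂ → ℂ := fun w => F w / B w ^ 2
  have hdense : closure ((↑Z)ᶜ : Set ℂ) = univ :=
    (Z.finite_toSet.countable.dense_compl ℂ).closure_eq
  have hφ : ∀ x ∈ U, x ∉ Z → Tendsto φ (𝓝[(↑Z)ᶜ] x) (𝓝 (φ x)) := fun x hx hxZ =>
    ((hF.continuousAt (hUo.mem_nhds hx)).div (hBc.continuousAt.pow 2)
      (pow_ne_zero 2 ((hB x).not.mpr hxZ))).tendsto.mono_left nhdsWithin_le_nhds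
  have hlim : ∀ x ∈ U, ∃ y ≠ 0, Tendsto φ (𝓝[(↑Z)ᶜ] x) (𝓝 y) := by
    intro x hx
    by_cases hxZ : x ∈ Z
    · obtain ⟨ψ, hψ, hψx, hFx⟩ := hdouble x hx ((hZ x).mp hxZ).2
      obtain ⟨y, hy, hy'⟩ := tendsto_div_sq_prod_sub_of_eventuallyEq hxZ hψ hψx hFx
      exact ⟨y, hy, hy'.mono_left (nhdsWithin_mono _ (by simpa using hxZ))⟩
    · have hFx : F x ≠ 0 := fun h0 => hxZ ((hZ x).mpr ⟨hx, h0⟩)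
      exact ⟨φ x, div_ne_zero hFx (pow_ne_zero 2 ((hB x).not.mpr hxZ)), hφ x hx hxZ⟩
  set u := extendFrom (↑Z)ᶜ φ
  have hu : ContinuousOn u U := continuousOn_extendFrom (by simp [hdense])
    fun x hx => (hlim x hx).imp fun _ hy => hy.2
  have hu0 : ∀ x ∈ U, u x ≠ 0 := fun x hx => by
    obtain ⟨y, hy, hy'⟩ := hlim x hx
    rwa [show u x = y from extendFrom_eq (by simp [hdense]) hy']
  obtain ⟨v, hv, hv2⟩ :=
    Complex.exists_continuousOn_pow_eq hUs hUo hu (fun ⟨x, hx, h0⟩ => hu0 x hx h0) two_ne_zero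
  refine ⟨v * B, hv.mul hBc.continuousOn, fun z hz => ?_⟩
  by_cases hzZ : z ∈ Z
  · simp [((hZ z).mp hzZ).2, (hB z).mpr hzZ]
  · have huz : u z = φ z := extendFrom_eq (by simp [hdense]) (hφ z hz hzZ)
    rw [Pi.mul_apply, mul_pow, hv2, huz, div_mul_cancel₀ _ (pow_ne_zero 2 ((hB z).not.mpr hzZ))]

end SquareRoot

namespace LocUnivMeroOn

variable {g : ℂ → ℂ}

theorem simplePoleAt_of_not_analyticAt (hg : LocUnivMeroOn g) {z : ℂ}
    (hz : ¬ AnalyticAt ℂ g z) : SimplePoleAt g z :=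
  (hg.2 z).resolve_left fun h => hz h.1

theorem analyticAt_of_eventually_norm_le (hg : LocUnivMeroOn g) {p : ℂ} {M : ℝ}
    (hb : ∀ᶠ w in 𝓝 p, ‖g w‖ ≤ M) : AnalyticAt ℂ g p := by
  by_contra hp
  exact (hg.simplePoleAt_of_not_analyticAt hp).not_isBoundedUnder
    (isBoundedUnder_of_eventually_le (hb.filter_mono nhdsWithin_le_nhds))

theorem deriv_ne_zero_iff (hg : LocUnivMeroOn g) {z : ℂ} :
    deriv g z ≠ 0 ↔ AnalyticAt ℂ g z := by
  refine ⟨fun hd => ?_, fun ha => ?_⟩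
  · by_contra ha
    exact hd (hg.simplePoleAt_of_not_analyticAt ha).deriv_eq_zero
  · rcases hg.2 z with ⟨-, hd⟩ | hp
    · exact hd
    · exact absurd ha.continuousAt hp.not_continuousAt

theorem exists_inv_deriv_eq (hg : LocUnivMeroOn g) {p : ℂ} (hp : ¬ AnalyticAt ℂ g p) :
    ∃ ψ : ℂ → ℂ, AnalyticAt ℂ ψ p ∧ ψ p ≠ 0 ∧
      (deriv g)⁻¹ =ᶠ[𝓝 p] fun w => (w - p) ^ 2 * ψ w :=
  (hg.simplePoleAt_of_not_analyticAt hp).exists_inv_deriv_eq (hg.1 p (mem_univ p))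

theorem continuous_inv_deriv (hg : LocUnivMeroOn g) : Continuous (deriv g)⁻¹ := by
  refine continuous_iff_continuousAt.mpr fun z => ?_
  by_cases hz : AnalyticAt ℂ g z
  · exact hz.deriv.continuousAt.inv₀ (hg.deriv_ne_zero_iff.mpr hz)
  · obtain ⟨ψ, hψ, -, heq⟩ := hg.exists_inv_deriv_eq hz
    exact (((continuous_id.sub continuous_const).pow 2).continuousAt.mul
      hψ.continuousAt).congr heq.symm

theorem exists_continuousOn_sq_eq_inv_deriv (hg : LocUnivMeroOn g) {U K : Set ℂ}
    (hUo : IsOpen U) (hUs : IsSimplyConnected U) (hK : IsCompact K)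
    (hana : ∀ z ∈ U \ K, AnalyticAt ℂ g z) :
    ∃ s : ℂ → ℂ, ContinuousOn s U ∧ ∀ z ∈ U, s z ^ 2 = (deriv g z)⁻¹ := by
  have hzero : ∀ z ∈ U, (deriv g)⁻¹ z = 0 → ¬ AnalyticAt ℂ g z := fun z _ h0 ha =>
    hg.deriv_ne_zero_iff.mpr ha (inv_eq_zero.mp h0)
  have hfin : {z ∈ U | (deriv g)⁻¹ z = 0}.Finite :=
    (hK.finite_sdiff_of_mem_codiscreteWithin
      (hg.1.mono_set (subset_univ K)).analyticAt_mem_codiscreteWithin).subset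
      fun z ⟨hzU, h0⟩ => ⟨by_contra fun hzK => hzero z hzU h0 (hana z ⟨hzU, hzK⟩), hzero z hzU h0⟩
  exact exists_continuousOn_sq_eq hUo hUs hg.continuous_inv_deriv.continuousOn hfin
    fun q hqU h0 => (hg.exists_inv_deriv_eq (hzero q hqU h0)).imp
      fun _ ⟨hψ, hψq, heq⟩ => ⟨hψ.continuousAt, hψq, heq⟩

end LocUnivMeroOn

theorem norm_sub_lt_of_chordal_lt {a b : ℂ} {ε : ℝ} (h : chordal a b < ε) :
    ‖a - b‖ < ε * ((1 + ‖a‖) * (1 + ‖b‖)) := by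
  have hsqrt : ∀ x : ℂ, 1 ≤ √(1 + ‖x‖ ^ 2) ∧ √(1 + ‖x‖ ^ 2) ≤ 1 + ‖x‖ := fun x =>
    ⟨Real.one_le_sqrt.mpr (le_add_of_nonneg_right (by positivity)),
      Real.sqrt_le_iff.mpr ⟨by positivity, by nlinarith [norm_nonneg x]⟩⟩
  have hden : 0 < √(1 + ‖a‖ ^ 2) * √(1 + ‖b‖ ^ 2) := by nlinarith [hsqrt a, hsqrt b]
  have hε : 0 ≤ ε := (div_nonneg (norm_nonneg _) hden.le).trans h.le
  rw [chordal, div_lt_iff₀ hden] at h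
  exact h.trans_le (mul_le_mul_of_nonneg_left
    (mul_le_mul (hsqrt a).2 (hsqrt b).2 (by positivity) (by positivity)) hε)

theorem norm_sub_lt_of_chordal_lt_of_norm_le {a b : ℂ} (h : chordal a b < 1 / 1000)
    (hb : ‖b‖ ≤ 4) : ‖a - b‖ < 1 / 25 := by
  have h1 := norm_sub_lt_of_chordal_lt h
  have h2 : ‖a‖ ≤ ‖b‖ + ‖a - b‖ := norm_le_norm_add_norm_sub' a b
  nlinarith [norm_nonneg a, norm_nonneg b, norm_nonneg (a - b)]

theorem norm_deriv_sub_le_of_forall_mem_sphere {G f : ℂ → ℂ} {c : ℂ} {r M : ℝ} (hr : 0 < r)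
    (hG : DifferentiableOn ℂ G (closedBall c r)) (hf : DifferentiableOn ℂ f (closedBall c r))
    (hM : ∀ w ∈ sphere c r, ‖G w - f w‖ ≤ M) : ‖deriv G c - deriv f c‖ ≤ M / r := by
  have hdiff : DiffContOnCl ℂ (fun w => G w - f w) (ball c r) :=
    (hG.sub hf).diffContOnCl_ball subset_rfl
  have hc : closedBall c r ∈ 𝓝 c := closedBall_mem_nhds c hr
  rw [← deriv_fun_sub (hG.differentiableAt hc) (hf.differentiableAt hc)]
  exact Complex.norm_deriv_le_of_forall_mem_sphere_norm_le hr hdiff hM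

theorem hasDerivAt_neg_one_div_sq {z : ℂ} (hz : z ≠ 0) :
    HasDerivAt (fun w => -1 / w ^ 2) (2 / z ^ 3) z := by
  refine ((hasDerivAt_const z (-1 : ℂ)).div (hasDerivAt_pow 2 z) (pow_ne_zero 2 hz)).congr_deriv ?_
  field_simp
  ring

theorem norm_deriv_sub_two_div_cube_le {G : ℂ → ℂ}
    (hana : ∀ w : ℂ, 1 / 2 < ‖w‖ → ‖w‖ < 2 → AnalyticAt ℂ G w)
    (hclose : ∀ w : ℂ, 1 / 2 ≤ ‖w‖ → ‖w‖ ≤ 2 → ‖G w - -1 / w ^ 2‖ ≤ 1 / 25)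
    {z : ℂ} (hz : ‖z‖ = 1) : ‖deriv G z - 2 / z ^ 3‖ ≤ 1 / 5 := by
  have hball : ∀ w ∈ closedBall z (1 / 4), 1 / 2 < ‖w‖ ∧ ‖w‖ < 2 := fun w hw => by
    rw [mem_closedBall, dist_eq_norm] at hw
    have := abs_norm_sub_norm_le w z
    constructor <;> linarith [abs_le.mp this]
  have hG : DifferentiableOn ℂ G (closedBall z (1 / 4)) := fun w hw =>
    (hana w (hball w hw).1 (hball w hw).2).differentiableAt.differentiableWithinAt
  have hf : DifferentiableOn ℂ (fun w => -1 / w ^ 2) (closedBall z (1 / 4)) := fun w hw =>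
    (hasDerivAt_neg_one_div_sq (norm_pos_iff.mp (by linarith [hball w hw]))).differentiableAt
      |>.differentiableWithinAt
  have h := norm_deriv_sub_le_of_forall_mem_sphere (by norm_num) hG hf fun w hw =>
    have hw' := hball w (sphere_subset_closedBall hw)
    hclose w hw'.1.le hw'.2.le
  rw [(hasDerivAt_neg_one_div_sq (norm_pos_iff.mp (by linarith))).deriv] at h
  linarith

theorem Complex.re_ne_zero_of_norm_sq_sub_one_lt_one {w : ℂ} (h : ‖w ^ 2 - 1‖ < 1) :
    w.re ≠ 0 := by
  intro hre
  have hre' : (w ^ 2 - 1).re = -(w.im ^ 2 + 1) := by simp [pow_two, hre]; ring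
  have := (w ^ 2 - 1).abs_re_le_norm
  rw [hre', abs_neg, abs_of_pos (by positivity)] at this
  nlinarith [sq_nonneg w.im]

theorem norm_sub_one_lt_one_of_mul_mul_eq_one {w a b : ℂ} (h : w * (a * b) = 1)
    (ha : ‖a - 1‖ ≤ 1 / 10) (hb : ‖b - 1‖ ≤ 1 / 10) : ‖w - 1‖ < 1 := by
  have hb' : ‖b‖ ≤ 11 / 10 := by linarith [norm_le_norm_add_norm_sub' b 1, norm_one (α := ℂ)]
  have hab : ‖a * b - 1‖ ≤ 21 / 100 := by
    calc ‖a * b - 1‖ = ‖(a - 1) * b + (b - 1)‖ := by ring_nf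
      _ ≤ ‖a - 1‖ * ‖b‖ + ‖b - 1‖ := (norm_add_le _ _).trans (by rw [norm_mul])
      _ ≤ 21 / 100 := by nlinarith [norm_nonneg (a - 1)]
  have hab' : 79 / 100 ≤ ‖a * b‖ := by
    linarith [norm_le_norm_add_norm_sub' (1 : ℂ) (a * b), norm_one (α := ℂ), norm_sub_rev (a * b) 1]
  have hw : ‖w‖ * ‖a * b‖ = 1 := by rw [← norm_mul, h, norm_one]
  have hw1 : ‖w - 1‖ = ‖w‖ * ‖a * b - 1‖ := by
    rw [← norm_mul, mul_sub, h, mul_one, norm_sub_rev]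
  nlinarith [norm_nonneg w, norm_nonneg (a * b - 1)]

theorem IsPreconnected.exists_re_eq_zero_of_eq_neg {α : Type*} [TopologicalSpace α] {s : Set α}
    (hs : IsPreconnected s) {q : α → ℂ} (hq : ContinuousOn q s) {a b : α} (ha : a ∈ s)
    (hb : b ∈ s) (hab : q b = -q a) : ∃ z ∈ s, (q z).re = 0 := by
  have hre : ContinuousOn (fun z => (q z).re) s := continuous_re.comp_continuousOn hq
  have hb' : (q b).re = -(q a).re := by rw [hab, neg_re]
  rcases le_total (q a).re 0 with h | h
  · exact hs.intermediate_value ha hb hre ⟨h, by linarith⟩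
  · exact hs.intermediate_value hb ha hre ⟨by linarith, h⟩

theorem not_exists_continuousOn_sq_mul_eq_one {D : ℂ → ℂ}
    (hD : ∀ z ∈ sphere (0 : ℂ) 1, ‖D z - 2 / z ^ 3‖ ≤ 1 / 5) :
    ¬ ∃ r : ℂ → ℂ, ContinuousOn r (sphere 0 1) ∧ ∀ z ∈ sphere (0 : ℂ) 1, r z ^ 2 * D z = 1 := by
  rintro ⟨r, hr, hsq⟩
  have hneg : ∀ z ∈ sphere (0 : ℂ) 1, -z ∈ sphere (0 : ℂ) 1 := fun z hz => by simpa using hz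
  have hne : ∀ z ∈ sphere (0 : ℂ) 1, z ≠ 0 := fun z hz => ne_zero_of_mem_unit_sphere ⟨z, hz⟩
  have hnorm : ∀ z ∈ sphere (0 : ℂ) 1, ‖z ^ 3 * D z / 2 - 1‖ ≤ 1 / 10 := fun z hz => by
    have hz1 : ‖z‖ = 1 := by simpa using hz
    rw [show z ^ 3 * D z / 2 - 1 = z ^ 3 / 2 * (D z - 2 / z ^ 3) by field_simp [hne z hz],
      norm_mul, norm_div, norm_pow, hz1, Complex.norm_two]
    linarith [hD z hz]
  set q : ℂ → ℂ := fun z => 2 * r z * r (-z) / (I * z ^ 3)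
  have hq : ContinuousOn q (sphere 0 1) :=
    ((continuousOn_const.mul hr).mul (hr.comp continuousOn_neg hneg)).div
      (continuousOn_const.mul (continuousOn_pow 3))
      fun z hz => mul_ne_zero I_ne_zero (pow_ne_zero 3 (hne z hz))
  have hq2 : ∀ z ∈ sphere (0 : ℂ) 1,
      q z ^ 2 * ((z ^ 3 * D z / 2) * ((-z) ^ 3 * D (-z) / 2)) = 1 := fun z hz => by
    have h1 := hsq z hz
    have h2 := hsq (-z) (hneg z hz)
    have hz0 := hne z hz
    simp only [q]
    field_simp
    linear_combination (-(r (-z) ^ 2 * D (-z))) * h1 - h2 - I_sq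
  have h1 : (1 : ℂ) ∈ sphere (0 : ℂ) 1 := by simp
  have hodd : q (-1) = -q 1 := by simp only [q]; ring_nf
  have hconn : IsPreconnected (sphere (0 : ℂ) 1) :=
    (isConnected_sphere (by simp [rank_real_complex]) 0 zero_le_one).isPreconnected
  obtain ⟨z, hz, hz0⟩ := hconn.exists_re_eq_zero_of_eq_neg hq h1 (hneg 1 h1) hodd
  exact Complex.re_ne_zero_of_norm_sq_sub_one_lt_one
    (norm_sub_one_lt_one_of_mul_mul_eq_one (hq2 z hz) (hnorm z hz)
      (by simpa using hnorm (-z) (hneg z hz))) hz0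

/-- For K = {1/2 ≤ |z| ≤ 2} and f(z) = -1/z², no sequence of locally univalent meromorphic
functions on all of ℂ converges to f uniformly on K in the chordal metric. -/
theorem no_loc_univ_mero_approx :
    ¬ ∃ g : ℕ → ℂ → ℂ, (∀ n, LocUnivMeroOn (g n)) ∧
      ∀ ε > (0:ℝ), ∃ N : ℕ, ∀ n ≥ N,
        ∀ z ∈ {z : ℂ | 1 / 2 ≤ ‖z‖ ∧ ‖z‖ ≤ 2},
          chordal (g n z) (-1 / z ^ 2) < ε := by
  rintro ⟨g, hg, happrox⟩
  obtain ⟨N, hN⟩ := happrox (1 / 1000) (by norm_num)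
  have hf : ∀ z : ℂ, 1 / 2 ≤ ‖z‖ → ‖-1 / z ^ 2‖ ≤ 4 := fun z hz => by
    rw [norm_div, norm_neg, norm_one, norm_pow, div_le_iff₀ (by positivity)]
    nlinarith
  have hclose : ∀ z : ℂ, 1 / 2 ≤ ‖z‖ → ‖z‖ ≤ 2 → ‖g N z - -1 / z ^ 2‖ < 1 / 25 :=
    fun z h1 h2 => norm_sub_lt_of_chordal_lt_of_norm_le (hN N le_rfl z ⟨h1, h2⟩) (hf z h1)
  have hana : ∀ z : ℂ, 1 / 2 < ‖z‖ → ‖z‖ < 2 → AnalyticAt ℂ (g N) z := fun z h1 h2 => by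
    refine (hg N).analyticAt_of_eventually_norm_le (M := 4 + 1 / 25) ?_
    have hK : ∀ᶠ w in 𝓝 z, 1 / 2 < ‖w‖ ∧ ‖w‖ < 2 :=
      (continuousAt_const.eventually_lt continuous_norm.continuousAt h1).and
        (continuous_norm.continuousAt.eventually_lt continuousAt_const h2)
    filter_upwards [hK] with w ⟨hw1, hw2⟩
    linarith [norm_le_norm_add_norm_sub' (g N w) (-1 / w ^ 2), hclose w hw1.le hw2.le, hf w hw1.le]
  have hderiv : ∀ z ∈ sphere (0 : ℂ) 1, ‖deriv (g N) z - 2 / z ^ 3‖ ≤ 1 / 5 := fun z hz =>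
    norm_deriv_sub_two_div_cube_le hana (fun w h1 h2 => (hclose w h1 h2).le) (by simpa using hz)
  obtain ⟨s, hs, hs2⟩ := (hg N).exists_continuousOn_sq_eq_inv_deriv isOpen_ball
    ((convex_ball (0 : ℂ) (5 / 4)).isSimplyConnected ⟨0, by simp⟩) (isCompact_closedBall 0 (1 / 2))
    fun z ⟨hzU, hzK⟩ => hana z (by simpa using hzK) (by simp at hzU; linarith)
  refine not_exists_continuousOn_sq_mul_eq_one hderiv ⟨s, hs.mono ?_, fun z hz => ?_⟩
  · exact sphere_subset_ball (by norm_num)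
  · have hz1 : ‖z‖ = 1 := by simpa using hz
    rw [hs2 z (sphere_subset_ball (by norm_num) hz), inv_mul_cancel₀]
    exact (hg N).deriv_ne_zero_iff.mpr (hana z (by linarith) (by linarith))
end

section
/- If a family Φ of locally univalent holomorphic self-maps of a domain Ω ⊆ ℂ admits a Φ-universal function u in 𝓗_{l.u.}(Ω) (i.e., {u∘φ : φ ∈ Φ} is dense in the space of locally univalent holomorphic functions on Ω with the compact-open topology), then for every compact K ⊆ Ω there exists φ ∈ Φ with φ(K) ∩ K = ∅ and φ injective on K. -/
/-!
Fix a compact `K ⊆ Ω` and a translation `z ↦ z + c` with `c` so large that `K + c` lies far from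
`u(K)`. Universality gives `φ ∈ Φ` with `u ∘ φ` uniformly `ε`-close to this translation on a
`δ`-neighbourhood of `K`, where `ε = δ / 8`. Then `φ(K)` misses `K`, since otherwise `u(φ z)`
would lie in `u(K)`. By Cauchy's estimate the error `u ∘ φ - (· + c)` has derivative at most `1/4`
near `K`, so `u ∘ φ` cannot identify two points of `K`; hence neither can `φ`.
-/

open Metric Set

theorem exists_const_forall_le_norm_sub_add {K : Set ℂ} {u : ℂ → ℂ} (hK : IsCompact K)
    (hu : ContinuousOn u K) (ε : ℝ) :
    ∃ c : ℂ, ∀ z ∈ K, ∀ w ∈ K, ε ≤ ‖u w - (z + c)‖ := by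
  obtain ⟨R, hR⟩ := hK.isBounded.exists_norm_le
  obtain ⟨M, hM⟩ := hK.exists_bound_of_continuousOn hu
  set c : ℝ := R + M + ε
  refine ⟨c, fun z hz w hw => ?_⟩
  have hc : c ≤ ‖(c : ℂ)‖ := by
    rw [Complex.norm_real, Real.norm_eq_abs]
    exact le_abs_self c
  have htriangle : ‖(c : ℂ)‖ ≤ ‖u w‖ + ‖z‖ + ‖u w - (z + c)‖ :=
    calc ‖(c : ℂ)‖ = ‖(u w - z) - (u w - (z + c))‖ := by congr 1; ring
      _ ≤ ‖u w - z‖ + ‖u w - (z + c)‖ := norm_sub_le _ _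
      _ ≤ ‖u w‖ + ‖z‖ + ‖u w - (z + c)‖ := by gcongr; exact norm_sub_le _ _
  linarith [hR z hz, hM w hw]

theorem norm_deriv_le_of_closedBall_subset {F : ℂ → ℂ} {U : Set ℂ} {x : ℂ} {r ε : ℝ}
    (hr : 0 < r) (hF : DifferentiableOn ℂ F U) (hxU : closedBall x r ⊆ U)
    (hbound : ∀ y ∈ U, ‖F y‖ ≤ ε) : ‖deriv F x‖ ≤ ε / r :=
  Complex.norm_deriv_le_of_forall_mem_sphere_norm_le hr (hF.diffContOnCl_ball hxU)
    fun y hy => hbound y (hxU (sphere_subset_closedBall hy))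

theorem injOn_of_norm_sub_add_const_le {G : ℂ → ℂ} {K : Set ℂ} {c : ℂ} {δ ε : ℝ}
    (hδ : 0 < δ) (hG : DifferentiableOn ℂ G (thickening δ K))
    (hclose : ∀ z ∈ thickening δ K, ‖G z - (z + c)‖ ≤ ε) (hεδ : 8 * ε ≤ δ) :
    InjOn G K := by
  intro z₁ hz₁ z₂ hz₂ hG₁₂
  set F : ℂ → ℂ := fun z => G z - (z + c)
  have hF : DifferentiableOn ℂ F (thickening δ K) :=
    hG.sub ((differentiable_id.add_const c).differentiableOn)
  have hFsub : F z₁ - F z₂ = z₂ - z₁ := by simp only [F, hG₁₂]; ring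
  have hnear : ∀ x ∈ closedBall z₁ (δ / 4), closedBall x (δ / 2) ⊆ thickening δ K :=
    fun x hx y hy => mem_thickening_iff.2 ⟨z₁, hz₁, by
      linarith [dist_triangle y x z₁, mem_closedBall.1 hx, mem_closedBall.1 hy]⟩
  have hball : closedBall z₁ (δ / 4) ⊆ thickening δ K := fun x hx =>
    hnear x hx (mem_closedBall_self (by positivity))
  have hderiv : ∀ x ∈ closedBall z₁ (δ / 4), ‖deriv F x‖ ≤ 1 / 4 := fun x hx =>
    (norm_deriv_le_of_closedBall_subset (by positivity) hF (hnear x hx) hclose).trans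
      (by rw [div_le_iff₀ (by positivity)]; linarith)
  have hz₂ : z₂ ∈ closedBall z₁ (δ / 4) := by
    rw [mem_closedBall, dist_eq_norm, ← hFsub]
    linarith [norm_sub_le (F z₁) (F z₂), hclose z₁ (self_subset_thickening hδ K hz₁),
      hclose z₂ (self_subset_thickening hδ K hz₂)]
  have hlip : ‖F z₂ - F z₁‖ ≤ 1 / 4 * ‖z₂ - z₁‖ :=
    (convex_closedBall z₁ (δ / 4)).norm_image_sub_le_of_norm_deriv_le
      (fun x hx => hF.differentiableAt (isOpen_thickening.mem_nhds (hball hx))) hderiv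
      (mem_closedBall_self (by positivity)) hz₂
  rw [← norm_neg, neg_sub, hFsub] at hlip
  have : ‖z₂ - z₁‖ = 0 := by linarith [norm_nonneg (z₂ - z₁)]
  exact (sub_eq_zero.1 (norm_eq_zero.1 this)).symm

theorem universal_implies_runaway_general (Ω : Set ℂ) (hΩ : IsOpen Ω)
    (Φ : Set (ℂ → ℂ))
    (hΦ : ∀ φ ∈ Φ, DifferentiableOn ℂ φ Ω ∧ Set.MapsTo φ Ω Ω ∧ ∀ z ∈ Ω, deriv φ z ≠ 0)
    (u : ℂ → ℂ) (hu : DifferentiableOn ℂ u Ω)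
    (huniv : ∀ f : ℂ → ℂ, DifferentiableOn ℂ f Ω → (∀ z ∈ Ω, deriv f z ≠ 0) →
      ∀ K : Set ℂ, K ⊆ Ω → IsCompact K → ∀ ε > (0:ℝ),
        ∃ φ ∈ Φ, ∀ z ∈ K, ‖u (φ z) - f z‖ < ε) :
    ∀ K : Set ℂ, K ⊆ Ω → IsCompact K →
      ∃ φ ∈ Φ, (∀ z ∈ K, φ z ∉ K) ∧ Set.InjOn φ K := by
  intro K hKΩ hK
  obtain ⟨δ, hδ, hδΩ⟩ := hK.exists_cthickening_subset_open hΩ hKΩ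
  obtain ⟨c, hc⟩ := exists_const_forall_le_norm_sub_add hK (hu.continuousOn.mono hKΩ) (δ / 8)
  obtain ⟨φ, hφΦ, happrox⟩ := huniv (· + c) (differentiable_id.add_const c).differentiableOn
    (fun z _ => by simp) (cthickening δ K) hδΩ hK.cthickening (δ / 8) (by positivity)
  obtain ⟨hφ, hφΩ, -⟩ := hΦ φ hφΦ
  refine ⟨φ, hφΦ, fun z hz hφz => (hc z hz _ hφz).not_gt (happrox z (self_subset_cthickening K hz)),
    InjOn.of_comp (g := u) ?_⟩
  exact injOn_of_norm_sub_add_const_le hδ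
    ((hu.comp hφ hφΩ).mono ((thickening_subset_cthickening δ K).trans hδΩ))
    (fun z hz => (happrox z (thickening_subset_cthickening δ K hz)).le) (by linarith)

/-- If a family Φ of locally univalent holomorphic self-maps of a domain Ω admits a
Φ-universal function u among locally univalent holomorphic functions on Ω, then for every
compact K ⊆ Ω there is φ ∈ Φ with φ(K) ∩ K = ∅ and φ injective on K. -/
theorem universal_implies_runaway (Ω : Set ℂ) (hΩ : IsOpen Ω) (hconn : IsConnected Ω)
    (Φ : Set (ℂ → ℂ))
    (hΦ : ∀ φ ∈ Φ, DifferentiableOn ℂ φ Ω ∧ Set.MapsTo φ Ω Ω ∧ ∀ z ∈ Ω, deriv φ z ≠ 0)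
    (u : ℂ → ℂ) (hu : DifferentiableOn ℂ u Ω) (hu' : ∀ z ∈ Ω, deriv u z ≠ 0)
    (huniv : ∀ f : ℂ → ℂ, DifferentiableOn ℂ f Ω → (∀ z ∈ Ω, deriv f z ≠ 0) →
      ∀ K : Set ℂ, K ⊆ Ω → IsCompact K → ∀ ε > (0:ℝ),
        ∃ φ ∈ Φ, ∀ z ∈ K, ‖u (φ z) - f z‖ < ε) :
    ∀ K : Set ℂ, K ⊆ Ω → IsCompact K →
      ∃ φ ∈ Φ, (∀ z ∈ K, φ z ∉ K) ∧ Set.InjOn φ K :=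
  universal_implies_runaway_general Ω hΩ Φ hΦ u hu huniv
end

section
/- (Rouché step in Proposition 2.6) Let L ⊆ ℂ be compact, equal to the closure of its interior, K ⊆ L° compact with δ := (1/2)dist(K, ∂L) > 0. If h is holomorphic on a neighborhood of L and ‖h(z) - z‖ < δ on L, then h is injective on K. -/
/-!
Let `g = h - id`, so `|g| < δ` on `L`. If `h z₁ = h z₂` for `z₁, z₂ ∈ K`, then
`d = |z₁ - z₂| = |g z₁ - g z₂| < 2δ`. The disc of radius `2δ` about a point of `K` misses `∂L`,
so its closure lies in `L`, and Cauchy's estimate makes `g` Lipschitz with constant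
`κ = δ / (2δ - d/2) < 1` on the closed disc of radius `d/2` about each `zᵢ`. Both discs contain the
midpoint of `z₁z₂`, so `d ≤ κ d`, forcing `d = 0`.
-/

open Metric Set

theorem IsPreconnected.subset_interior_of_disjoint_frontier {X : Type*} [TopologicalSpace X]
    {s t : Set X} (ht : IsPreconnected t) (hne : (t ∩ interior s).Nonempty)
    (hdisj : Disjoint t (frontier s)) : t ⊆ interior s := by
  have hcover : t ⊆ interior s ∪ (closure s)ᶜ := fun x hx ↦
    (em (x ∈ interior s)).imp id fun hint hcl ↦ hdisj.notMem_of_mem_left hx ⟨hcl, hint⟩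
  exact ht.subset_left_of_subset_union isOpen_interior isClosed_closure.isOpen_compl
    (disjoint_compl_right.mono_left (interior_subset.trans subset_closure)) hcover hne

namespace Metric

variable {E : Type*} [SeminormedAddCommGroup E] [NormedSpace ℝ E] {s : Set E} {x : E} {r : ℝ}

theorem ball_subset_interior_of_forall_frontier_le_dist (hx : x ∈ interior s) (hr : 0 < r)
    (hfr : ∀ w ∈ frontier s, r ≤ dist x w) : ball x r ⊆ interior s :=
  (convex_ball x r).isPreconnected.subset_interior_of_disjoint_frontier
    ⟨x, mem_ball_self hr, hx⟩
    (disjoint_left.mpr fun _ hw hwfr ↦ (hfr _ hwfr).not_gt (mem_ball'.mp hw))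

theorem closedBall_subset_of_forall_frontier_le_dist (hs : IsClosed s) (hx : x ∈ interior s)
    (hr : 0 < r) (hfr : ∀ w ∈ frontier s, r ≤ dist x w) : closedBall x r ⊆ s := by
  rw [← closure_ball x hr.ne']
  exact closure_minimal
    ((ball_subset_interior_of_forall_frontier_le_dist hx hr hfr).trans interior_subset) hs

end Metric

theorem dist_le_mul_dist_of_forall_closedBall {E F : Type*} [SeminormedAddCommGroup E]
    [NormedSpace ℝ E] [PseudoMetricSpace F] {f : E → F} {κ r : ℝ} {x y : E}
    (hxy : dist x y ≤ 2 * r)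
    (hx : ∀ u ∈ closedBall x r, ∀ v ∈ closedBall x r, dist (f u) (f v) ≤ κ * dist u v)
    (hy : ∀ u ∈ closedBall y r, ∀ v ∈ closedBall y r, dist (f u) (f v) ≤ κ * dist u v) :
    dist (f x) (f y) ≤ κ * dist x y := by
  set m := midpoint ℝ x y
  have hr : 0 ≤ r := by linarith [dist_nonneg (x := x) (y := y)]
  have hmx : m ∈ closedBall x r := by
    rw [mem_closedBall, dist_midpoint_left, Real.norm_two]
    linarith
  have hmy : m ∈ closedBall y r := by
    rw [mem_closedBall, dist_midpoint_right, Real.norm_two]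
    linarith
  calc dist (f x) (f y) ≤ dist (f x) (f m) + dist (f m) (f y) := dist_triangle _ _ _
    _ ≤ κ * dist x m + κ * dist m y :=
      add_le_add (hx x (mem_closedBall_self hr) m hmx) (hy m hmy y (mem_closedBall_self hr))
    _ = κ * dist x y := by
      rw [← mul_add, dist_add_dist_of_mem_segment (midpoint_mem_segment x y)]

namespace Complex

variable {E : Type*} [NormedAddCommGroup E] [NormedSpace ℂ E] {f : ℂ → E} {c : ℂ} {R t M : ℝ}

theorem norm_deriv_le_of_mem_closedBall (ht : t < R) (hf : DiffContOnCl ℂ f (ball c R))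
    (hM : ∀ z ∈ closedBall c R, ‖f z‖ ≤ M) {w : ℂ} (hw : w ∈ closedBall c t) :
    ‖deriv f w‖ ≤ M / (R - t) := by
  have hdist : R - t + dist w c ≤ R := by linarith [mem_closedBall.mp hw]
  exact norm_deriv_le_of_forall_mem_sphere_norm_le (sub_pos.mpr ht)
    (hf.mono (ball_subset_ball' hdist))
    fun z hz ↦ hM z (closedBall_subset_closedBall' hdist (sphere_subset_closedBall hz))

theorem dist_le_mul_dist_of_mem_closedBall (ht : t < R) (hf : DiffContOnCl ℂ f (ball c R))
    (hM : ∀ z ∈ closedBall c R, ‖f z‖ ≤ M) {x y : ℂ} (hx : x ∈ closedBall c t)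
    (hy : y ∈ closedBall c t) : dist (f x) (f y) ≤ M / (R - t) * dist x y := by
  simpa only [dist_eq_norm] using
    (convex_closedBall c t).norm_image_sub_le_of_norm_deriv_le
    (fun _ hw ↦ hf.differentiableAt isOpen_ball (closedBall_subset_ball ht hw))
    (fun _ hw ↦ norm_deriv_le_of_mem_closedBall ht hf hM hw) hy hx

end Complex

theorem rouche_injective_general (K L : Set ℂ)
    (hLcl : L = closure (interior L)) (hKL : K ⊆ interior L)
    (δ : ℝ)
    (hdist : ∀ z ∈ K, ∀ w ∈ frontier L, 2 * δ ≤ dist z w)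
    (U : Set ℂ) (hLU : L ⊆ U)
    (h : ℂ → ℂ) (hh : DifferentiableOn ℂ h U)
    (hclose : ∀ z ∈ L, ‖h z - z‖ < δ) :
    Set.InjOn h K := by
  intro z₁ hz₁ z₂ hz₂ heq
  set g : ℂ → ℂ := fun z ↦ h z - z
  set d := dist z₁ z₂
  have hd_eq : d = dist (g z₁) (g z₂) := by
    simp only [d, g, dist_eq_norm, heq, sub_sub_sub_cancel_left, norm_sub_rev]
  have hd_lt : d < 2 * δ := hd_eq ▸ (dist_le_norm_add_norm _ _).trans_lt
    (by linarith [hclose _ (interior_subset (hKL hz₁)), hclose _ (interior_subset (hKL hz₂))])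
  have hd_nonneg : 0 ≤ d := dist_nonneg
  set κ := δ / (2 * δ - d / 2)
  have hκ : κ < 1 := (div_lt_one (by linarith)).mpr (by linarith)
  have hLip : ∀ e ∈ K, ∀ u ∈ closedBall e (d / 2), ∀ v ∈ closedBall e (d / 2),
      dist (g u) (g v) ≤ κ * dist u v := fun e he u hu v hv ↦ by
    have hcl := closedBall_subset_of_forall_frontier_le_dist (hLcl ▸ isClosed_closure) (hKL he)
      (by linarith) (hdist e he)
    have hg : DifferentiableOn ℂ g U := hh.sub differentiableOn_id
    refine Complex.dist_le_mul_dist_of_mem_closedBall ?_ (hg.diffContOnCl_ball (hcl.trans hLU))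
      (fun z hz ↦ (hclose z (hcl hz)).le) hu hv
    linarith
  have hd_le : d ≤ κ * d := hd_eq.trans_le <|
    dist_le_mul_dist_of_forall_closedBall (by linarith) (hLip z₁ hz₁) (hLip z₂ hz₂)
  exact dist_le_zero.mp (by nlinarith)

/-- Rouché step: if L is compact and equal to the closure of its interior, K ⊆ L° is
compact with dist(K, ∂L) = 2δ > 0, and h is holomorphic near L with |h(z) - z| < δ on L,
then h is injective on K. -/
theorem rouche_injective (K L : Set ℂ) (hK : IsCompact K) (hL : IsCompact L)
    (hLcl : L = closure (interior L)) (hKL : K ⊆ interior L)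
    (δ : ℝ) (hδ : 0 < δ)
    (hdist : ∀ z ∈ K, ∀ w ∈ frontier L, 2 * δ ≤ dist z w)
    (U : Set ℂ) (hU : IsOpen U) (hLU : L ⊆ U)
    (h : ℂ → ℂ) (hh : DifferentiableOn ℂ h U)
    (hclose : ∀ z ∈ L, ‖h z - z‖ < δ) :
    Set.InjOn h K :=
  rouche_injective_general K L hLcl hKL δ hdist U hLU h hh hclose
end
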